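/- Let a : ℝ → ℝ be twice continuously differentiable with a(t) > 0 for all t and with H(t) = a'(t)/a(t) not identically zero. Suppose H(t)/a(t) tends to finite limits as t → +∞ and as t → −∞, and that ∫_{0}^{T} a(t) dt → +∞ and ∫_{−T}^{0} a(t) dt → +∞ as T → +∞ (null completeness in both directions). Define the open-FRW finite-interval ANEC integral I(T₋,T₊) = ∫_{T₋}^{T₊} (−2·(H'(t) + 1/a(t)²))/a(t) dt. Then I(T₋,T₊) converges, as T₋ → −∞ and T₊ → +∞, to a limit l in the extended reals with l < 0; specifically, either l = −∞, or ∫_ℝ (H²/a + a^{−3}) dt < ∞, both endpoint limits of H/a are zero, and l = −2·∫_ℝ (H(t)²/a(t) + a(t)^{−3}) dt < 0. -/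

import Mathlib

open Filter MeasureTheory Set Topology

/-!
Put `g = H / a` and `φ = H² / a + a⁻³ > 0`. Since `a' = H a`, one has `g' = H' / a - H² / a`, so the
ANEC integrand is `-2 g' - 2 φ` and `I(T₋, T₊) = -2 (g T₊ - g T₋) - 2 ∫_{T₋}^{T₊} φ`, whose boundary
term converges by hypothesis. If `φ` is not integrable, `∫ φ → ∞` and `I → -∞`. If it is, then
`g² a ≤ φ` is integrable at both ends while, by null completeness, `a` is not; this forces both
endpoint limits of `g` to vanish, and `I → -2 ∫ φ < 0`.
-/

theorem MeasureTheory.IntegrableAtFilter.eq_zero_of_tendsto_of_sq_mul_le {α : Type*}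
    [MeasurableSpace α] {μ : Measure α} {l : Filter α} [l.IsMeasurablyGenerated]
    {f g a : α → ℝ} {L : ℝ}
    (hf : IntegrableAtFilter f l μ) (hg : Tendsto g l (𝓝 L)) (hgaf : ∀ x, g x ^ 2 * a x ≤ f x)
    (ha : AEStronglyMeasurable a μ) (ha0 : ∀ x, 0 ≤ a x) (hna : ¬ IntegrableAtFilter a l μ) :
    L = 0 := by
  by_contra hL
  have hc : 0 < L ^ 2 / 2 := by positivity
  obtain ⟨s, hsl, hfs⟩ := hf
  have hev : ∀ᶠ x in l, L ^ 2 / 2 < g x ^ 2 :=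
    (hg.pow 2).eventually (eventually_gt_nhds (half_lt_self (by positivity)))
  obtain ⟨t, htl, htm, hgt⟩ := hev.exists_measurable_mem
  refine hna ⟨s ∩ t, inter_mem hsl htl,
    ((hfs.mono_set inter_subset_left).const_mul (L ^ 2 / 2)⁻¹).mono' ha.restrict ?_⟩
  refine ae_restrict_of_ae_restrict_of_subset inter_subset_right
    (ae_restrict_of_forall_mem htm fun x hx => ?_)
  rw [Real.norm_of_nonneg (ha0 x), le_inv_mul_iff₀ hc]
  exact (mul_le_mul_of_nonneg_right (hgt x hx).le (ha0 x)).trans (hgaf x)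

theorem not_integrableAtFilter_atTop_of_tendsto_intervalIntegral {f : ℝ → ℝ} {c : ℝ}
    (hf : LocallyIntegrable f) (hlim : Tendsto (fun T => ∫ t in c..T, f t) atTop atTop) :
    ¬ IntegrableAtFilter f atTop := fun h =>
  not_tendsto_atTop_of_tendsto_nhds (intervalIntegral_tendsto_integral_Ioi c
    ((integrableOn_Ici_iff_integrableAtFilter_atTop.2 ⟨h, hf.locallyIntegrableOn _⟩).mono_set
      Ioi_subset_Ici_self) tendsto_id) hlim

theorem not_integrableAtFilter_atBot_of_tendsto_intervalIntegral {f : ℝ → ℝ} {c : ℝ}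
    (hf : LocallyIntegrable f) (hlim : Tendsto (fun T => ∫ t in T..c, f t) atBot atTop) :
    ¬ IntegrableAtFilter f atBot := fun h =>
  not_tendsto_atTop_of_tendsto_nhds (intervalIntegral_tendsto_integral_Iic c
    (integrableOn_Iic_iff_integrableAtFilter_atBot.2 ⟨h, hf.locallyIntegrableOn _⟩) tendsto_id) hlim

theorem tendsto_intervalIntegral_atTop_of_not_integrable {f : ℝ → ℝ} (hf : LocallyIntegrable f)
    (hf0 : 0 ≤ f) (hfi : ¬ Integrable f) :
    Tendsto (fun p : ℝ × ℝ => ∫ t in p.1..p.2, f t) (atBot ×ˢ atTop) atTop := by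
  have hinf : ∫⁻ t, ENNReal.ofReal (f t) = ⊤ := by
    by_contra h
    exact hfi ((lintegral_ofReal_ne_top_iff_integrable hf.aestronglyMeasurable
      (ae_of_all _ hf0)).1 h)
  have hlim := (aecover_Ioc (μ := volume) tendsto_fst tendsto_snd
    ).lintegral_tendsto_of_countably_generated hf.aestronglyMeasurable.aemeasurable.ennreal_ofReal
  rw [hinf] at hlim
  refine tendsto_atTop.2 fun M => ?_
  filter_upwards [hlim.eventually (lt_mem_nhds ENNReal.ofReal_lt_top),
    tendsto_fst.eventually (eventually_le_atBot 0), tendsto_snd.eventually (eventually_ge_atTop 0)]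
    with p hM hp₁ hp₂
  have hint : IntegrableOn f (Ioc p.1 p.2) :=
    (hf.integrableOn_isCompact isCompact_Icc).mono_set Ioc_subset_Icc_self
  rw [← ofReal_integral_eq_lintegral_ofReal hint (ae_of_all _ fun t => hf0 t)] at hM
  rw [intervalIntegral.integral_of_le (hp₁.trans hp₂)]
  exact (ENNReal.ofReal_lt_ofReal_iff'.1 hM).1.le

theorem hasDerivAt_div_of_hasDerivAt_eq_mul {a H : ℝ → ℝ} {H' t : ℝ}
    (ha : HasDerivAt a (H t * a t) t) (hH : HasDerivAt H H' t) (hat : a t ≠ 0) :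
    HasDerivAt (fun s => H s / a s) (H' / a t - H t ^ 2 / a t) t :=
  (hH.div ha hat).congr_deriv (by field_simp)

theorem integral_anec_integrand_eq {a H : ℝ → ℝ} (ha : ∀ t, HasDerivAt a (H t * a t) t)
    (ha0 : ∀ t, a t ≠ 0) (hH : ContDiff ℝ 1 H) (x y : ℝ) :
    ∫ t in x..y, (-2 * (deriv H t + 1 / a t ^ 2)) / a t =
      -2 * (H y / a y - H x / a x) - 2 * ∫ t in x..y, (H t ^ 2 / a t + 1 / a t ^ 3) := by
  have haC : Continuous a := continuous_iff_continuousAt.2 fun t => (ha t).continuousAt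
  have hHC := hH.continuous
  have hH'C := hH.continuous_deriv le_rfl
  have hg'C : Continuous fun t => deriv H t / a t - H t ^ 2 / a t := by
    fun_prop (disch := simp [ha0])
  have hφC : Continuous fun t => H t ^ 2 / a t + 1 / a t ^ 3 := by
    fun_prop (disch := simp [ha0])
  have hboundary : ∫ t in x..y, (deriv H t / a t - H t ^ 2 / a t) = H y / a y - H x / a x :=
    intervalIntegral.integral_eq_sub_of_hasDerivAt (fun t _ => hasDerivAt_div_of_hasDerivAt_eq_mul
      (ha t) (hH.differentiable one_ne_zero t).hasDerivAt (ha0 t)) (hg'C.intervalIntegrable _ _)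
  rw [← hboundary, ← intervalIntegral.integral_const_mul, ← intervalIntegral.integral_const_mul,
    ← intervalIntegral.integral_sub ((hg'C.intervalIntegrable _ _).const_mul _)
      ((hφC.intervalIntegrable _ _).const_mul _)]
  refine intervalIntegral.integral_congr fun t _ => ?_
  have hat := ha0 t
  field_simp
  ring

theorem eq_zero_of_tendsto_div_of_integrable {a H : ℝ → ℝ} {l : Filter ℝ}
    [l.IsMeasurablyGenerated] {L : ℝ} (hpos : ∀ t, 0 < a t) (haC : Continuous a)
    (hφ : Integrable fun t => H t ^ 2 / a t + 1 / a t ^ 3)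
    (hg : Tendsto (fun t => H t / a t) l (𝓝 L)) (hna : ¬ IntegrableAtFilter a l) : L = 0 := by
  refine (hφ.integrableAtFilter l).eq_zero_of_tendsto_of_sq_mul_le hg (fun t => ?_)
    haC.aestronglyMeasurable (fun t => (hpos t).le) hna
  have hat := hpos t
  rw [div_pow, div_mul_eq_mul_div, sq (a t), mul_div_mul_right _ _ hat.ne']
  exact le_add_of_nonneg_right (by positivity)

theorem open_null_complete_ANEC_negative_general
    (a H : ℝ → ℝ) (ha : ContDiff ℝ 2 a) (hpos : ∀ t, 0 < a t)
    (hH : ∀ t, H t = deriv a t / a t)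
    (hlimp : ∃ Lp : ℝ, Tendsto (fun t => H t / a t) atTop (nhds Lp))
    (hlimm : ∃ Lm : ℝ, Tendsto (fun t => H t / a t) atBot (nhds Lm))
    (hfut : Tendsto (fun T => ∫ t in (0:ℝ)..T, a t) atTop atTop)
    (hpast : Tendsto (fun T => ∫ t in (-T)..(0:ℝ), a t) atTop atTop) :
    ∃ l : EReal,
      Tendsto (fun p : ℝ × ℝ =>
          ((∫ t in p.1..p.2, (-2 * (deriv H t + 1 / (a t) ^ 2)) / a t : ℝ) : EReal))
        (atBot ×ˢ atTop) (nhds l) ∧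
      l < 0 ∧
      (l = ⊥ ∨
        (Integrable (fun t => (H t) ^ 2 / a t + 1 / (a t) ^ 3) ∧
          Tendsto (fun t => H t / a t) atTop (nhds 0) ∧
          Tendsto (fun t => H t / a t) atBot (nhds 0) ∧
          l = ((-2 * ∫ t : ℝ, ((H t) ^ 2 / a t + 1 / (a t) ^ 3) : ℝ) : EReal) ∧
          (-2 * ∫ t : ℝ, ((H t) ^ 2 / a t + 1 / (a t) ^ 3) : ℝ) < 0)) := by
  obtain ⟨Lp, hLp⟩ := hlimp
  obtain ⟨Lm, hLm⟩ := hlimm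
  have ha0 : ∀ t, a t ≠ 0 := fun t => (hpos t).ne'
  have haH : ∀ t, HasDerivAt a (H t * a t) t := fun t => by
    simpa [hH t, div_mul_cancel₀ _ (ha0 t)] using (ha.differentiable two_ne_zero t).hasDerivAt
  have hH1 : ContDiff ℝ 1 H := by
    rw [funext hH]; exact ha.deriv'.div (ha.of_le one_le_two) ha0
  have hI := integral_anec_integrand_eq haH ha0 hH1
  set φ := fun t => H t ^ 2 / a t + 1 / a t ^ 3
  have hφpos : ∀ t, 0 < φ t := fun t => by have hat := hpos t; positivity
  have hφC : Continuous φ := by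
    have haC := ha.continuous
    have hHC := hH1.continuous
    fun_prop (disch := simp [ha0])
  have haL : LocallyIntegrable a := ha.continuous.locallyIntegrable
  by_cases hφi : Integrable φ
  · obtain rfl : Lp = 0 := eq_zero_of_tendsto_div_of_integrable hpos ha.continuous hφi hLp
      (not_integrableAtFilter_atTop_of_tendsto_intervalIntegral haL hfut)
    obtain rfl : Lm = 0 := eq_zero_of_tendsto_div_of_integrable hpos ha.continuous hφi hLm
      (not_integrableAtFilter_atBot_of_tendsto_intervalIntegral (c := 0) haL
        (by simpa [Function.comp_def] using hpast.comp tendsto_neg_atBot_atTop))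
    have hφ_integral_pos : 0 < ∫ t, φ t :=
      integral_pos_of_integrable_nonneg_nonzero hφC hφi (fun t => (hφpos t).le) (hφpos 0).ne'
    refine ⟨_, EReal.tendsto_coe.2 ?_, by exact_mod_cast (by linarith : -2 * ∫ t, φ t < 0),
      Or.inr ⟨hφi, hLp, hLm, rfl, by linarith⟩⟩
    simp_rw [hI]
    simpa using (((hLp.comp tendsto_snd).sub (hLm.comp tendsto_fst)).const_mul (-2)).sub
      ((intervalIntegral_tendsto_integral hφi tendsto_fst tendsto_snd).const_mul 2)
  · refine ⟨⊥, EReal.tendsto_coe_nhds_bot_iff.2 ?_, EReal.bot_lt_zero, Or.inl rfl⟩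
    simp_rw [hI, sub_eq_add_neg]
    exact (((hLp.comp tendsto_snd).sub (hLm.comp tendsto_fst)).const_mul (-2)).add_atBot
      (tendsto_neg_atTop_atBot.comp ((tendsto_intervalIntegral_atTop_of_not_integrable
        hφC.locallyIntegrable (fun t => (hφpos t).le) hφi).const_mul_atTop two_pos))

/-- Open FRW obstruction (Appendix C): a non-static, null-complete open (`k = −1`) FRW
spacetime with regular affine ends has affine ANEC limit `l < 0` in the extended reals:
either `l = −∞`, or `∫_ℝ (H²/a + a⁻³) < ∞`, both endpoint limits of `H/a` vanish, and
`l = −2 ∫_ℝ (H²/a + a⁻³) < 0`. -/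
theorem open_null_complete_ANEC_negative
    (a H : ℝ → ℝ) (ha : ContDiff ℝ 2 a) (hpos : ∀ t, 0 < a t)
    (hH : ∀ t, H t = deriv a t / a t)
    (hns : ∃ t, H t ≠ 0)
    (hlimp : ∃ Lp : ℝ, Tendsto (fun t => H t / a t) atTop (nhds Lp))
    (hlimm : ∃ Lm : ℝ, Tendsto (fun t => H t / a t) atBot (nhds Lm))
    (hfut : Tendsto (fun T => ∫ t in (0:ℝ)..T, a t) atTop atTop)
    (hpast : Tendsto (fun T => ∫ t in (-T)..(0:ℝ), a t) atTop atTop) :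
    ∃ l : EReal,
      Tendsto (fun p : ℝ × ℝ =>
          ((∫ t in p.1..p.2, (-2 * (deriv H t + 1 / (a t) ^ 2)) / a t : ℝ) : EReal))
        (atBot ×ˢ atTop) (nhds l) ∧
      l < 0 ∧
      (l = ⊥ ∨
        (Integrable (fun t => (H t) ^ 2 / a t + 1 / (a t) ^ 3) ∧
          Tendsto (fun t => H t / a t) atTop (nhds 0) ∧
          Tendsto (fun t => H t / a t) atBot (nhds 0) ∧
          l = ((-2 * ∫ t : ℝ, ((H t) ^ 2 / a t + 1 / (a t) ^ 3) : ℝ) : EReal) ∧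
          (-2 * ∫ t : ℝ, ((H t) ^ 2 / a t + 1 / (a t) ^ 3) : ℝ) < 0)) :=
  open_null_complete_ANEC_negative_general a H ha hpos hH hlimp hlimm hfut hpast
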